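/- arXiv:1508.01337 — 3 statements merged into one kernel-verified Lean document; each statement's English description precedes it below -/
import Mathlib

section
/- Every complete semiring is zerosumfree: if S is a semiring equipped with an infinite summation law making it complete, then for all s, t ∈ S, s + t = 0 implies s = 0 and t = 0. -/
/-- A complete semiring in the sense of Eilenberg: a semiring equipped with a
summation law over arbitrary index sets, compatible with the finitary addition,
satisfying partition additivity (encoded via sigma types plus invariance under
bijections of index sets) and infinite distributivity on both sides. -/
structure CompleteSemiringStruct (S : Type) [Semiring S] where
  tsum : {I : Type} → (I → S) → S
  tsum_empty : ∀ f : PEmpty → S, tsum f = 0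
  tsum_single : ∀ f : PUnit → S, tsum f = f PUnit.unit
  tsum_pair : ∀ f : Bool → S, tsum f = f false + f true
  tsum_sigma : ∀ {J : Type} {I : J → Type} (f : (Σ j, I j) → S),
    tsum f = tsum fun j => tsum fun i : I j => f ⟨j, i⟩
  tsum_equiv : ∀ {I J : Type} (e : I ≃ J) (f : J → S), tsum (f ∘ e) = tsum f
  tsum_mul_left : ∀ {I : Type} (s : S) (f : I → S),
    tsum (fun i => s * f i) = s * tsum f
  tsum_mul_right : ∀ {I : Type} (s : S) (f : I → S),
    tsum (fun i => f i * s) = tsum f * s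

private theorem myTsumZero {S : Type} [Semiring S] (C : CompleteSemiringStruct S)
    (I : Type) : C.tsum (fun _ : I => (0 : S)) = 0 := by
  have h := C.tsum_mul_left (0 : S) (fun _ : I => (1 : S))
  simpa using h

/-- Every complete semiring is zerosumfree. -/
theorem complete_semiring_zerosumfree {S : Type} [Semiring S]
    (C : CompleteSemiringStruct S) (s t : S) (h : s + t = 0) :
    s = 0 ∧ t = 0 := by
  -- the alternating family s, t, s, t, ... indexed by ℕ × Bool (as a sigma type)
  set N : Type := Σ _ : ℕ, Bool with hN
  have g : N → S := fun x => cond x.2 t s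
  -- index family for the shifted grouping: one singleton, then everything again
  let I : Bool → Type := fun j => cond j N PUnit
  let f : (Σ j : Bool, I j) → S := fun x =>
    match x with
    | ⟨false, _⟩ => s
    | ⟨true, ⟨_, b⟩⟩ => cond b s t
  -- the shift equivalence
  let e : N ≃ (Σ j : Bool, I j) :=
    { toFun := fun x =>
        match x with
        | ⟨0, false⟩ => ⟨false, PUnit.unit⟩
        | ⟨n + 1, false⟩ => ⟨true, ⟨n, true⟩⟩
        | ⟨n, true⟩ => ⟨true, ⟨n, false⟩⟩
      invFun := fun x =>
        match x with
        | ⟨false, _⟩ => ⟨0, false⟩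
        | ⟨true, ⟨n, false⟩⟩ => ⟨n, true⟩
        | ⟨true, ⟨n, true⟩⟩ => ⟨n + 1, false⟩
      left_inv := by rintro ⟨(_ | n), (_ | _)⟩ <;> rfl
      right_inv := by
        rintro ⟨(_ | _), x⟩
        · cases x; rfl
        · rcases x with ⟨(_ | n), (_ | _)⟩ <;> rfl }
  have key : f ∘ e = fun x : N => cond x.2 t s := by
    funext x
    rcases x with ⟨(_ | n), (_ | _)⟩ <;> rfl
  -- First grouping: pairs (s + t), total 0
  have h1 : C.tsum (fun x : N => cond x.2 t s) = 0 := by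
    rw [C.tsum_sigma (fun x : N => cond x.2 t s)]
    have : (fun n : ℕ => C.tsum fun b : Bool => cond b t s) = fun _ : ℕ => (0 : S) := by
      funext n
      rw [C.tsum_pair]
      simpa using h
    simp only [this]
    exact myTsumZero C ℕ
  -- Second grouping: s + (pairs (t + s)), total s
  have h2 : C.tsum f = s := by
    rw [C.tsum_sigma f, C.tsum_pair]
    have hfalse : C.tsum (fun i : I false => f ⟨false, i⟩) = s := C.tsum_single _
    have htrue : C.tsum (fun i : I true => f ⟨true, i⟩) = 0 := by
      show C.tsum (fun i : N => f ⟨true, i⟩) = 0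
      rw [C.tsum_sigma (fun i : N => f ⟨true, i⟩)]
      have : (fun n : ℕ => C.tsum fun b : Bool => f ⟨true, ⟨n, b⟩⟩) = fun _ : ℕ => (0 : S) := by
        funext n
        rw [C.tsum_pair]
        show t + s = 0
        rw [add_comm]; exact h
      simp only [this]
      exact myTsumZero C ℕ
    rw [hfalse, htrue, add_zero]
  have hs : s = 0 := by
    have := C.tsum_equiv e f
    rw [key, h1] at this
    rw [← h2, ← this]
  refine ⟨hs, ?_⟩
  rw [hs, zero_add] at h
  exact h
end

section
/- If a real vector space V admits a duality structure (i,e), then V is finite dimensional. -/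
open TensorProduct

/-- A duality structure on a real vector space `V`: a symmetric copairing
`unit : ℝ → V ⊗ V`, a symmetric pairing `counit : V ⊗ V → ℝ`, satisfying the
zig-zag equation `(counit ⊗ 1) ∘ (1 ⊗ unit) = 1` (under the identifications
`V ⊗ ℝ = V = ℝ ⊗ V`). -/
structure DualityStructure (V : Type) [AddCommGroup V] [Module ℝ V] where
  unit : ℝ →ₗ[ℝ] V ⊗[ℝ] V
  counit : V ⊗[ℝ] V →ₗ[ℝ] ℝ
  unit_symm : (TensorProduct.comm ℝ V V).toLinearMap ∘ₗ unit = unit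
  counit_symm : counit ∘ₗ (TensorProduct.comm ℝ V V).toLinearMap = counit
  zigzag : (TensorProduct.lid ℝ V).toLinearMap
      ∘ₗ LinearMap.rTensor V counit
      ∘ₗ (TensorProduct.assoc ℝ V V V).symm.toLinearMap
      ∘ₗ LinearMap.lTensor V unit
      ∘ₗ (TensorProduct.rid ℝ V).symm.toLinearMap = LinearMap.id

/-- If a real vector space admits a duality structure, then it is finite
dimensional. -/
theorem finiteDimensional_of_dualityStructure {V : Type} [AddCommGroup V]
    [Module ℝ V] (D : DualityStructure V) : FiniteDimensional ℝ V := by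
  classical
  obtain ⟨S, hS⟩ := TensorProduct.exists_finset (D.unit 1)
  refine ⟨⟨S.image Prod.snd, le_antisymm le_top ?_⟩⟩
  intro v _
  have hv := congrArg (fun f : V →ₗ[ℝ] V => f v) D.zigzag
  simp only [LinearMap.comp_apply, LinearMap.id_apply, LinearEquiv.coe_coe] at hv
  rw [TensorProduct.rid_symm_apply, LinearMap.lTensor_tmul, hS, tmul_sum] at hv
  rw [← hv]
  simp only [map_sum]
  apply Submodule.sum_mem
  intro p hp
  have : (TensorProduct.assoc ℝ V V V).symm (v ⊗ₜ[ℝ] (p.1 ⊗ₜ[ℝ] p.2))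
      = (v ⊗ₜ[ℝ] p.1) ⊗ₜ[ℝ] p.2 := rfl
  rw [this, LinearMap.rTensor_tmul, TensorProduct.lid_tmul]
  exact Submodule.smul_mem _ _ (Submodule.subset_span
    (Finset.mem_coe.mpr (Finset.mem_image_of_mem Prod.snd hp)))
end

section
/- Let λ ∈ ℝ ∖ {0, 1, −1} and let H ⊆ V ∖ {0} be a λ-profinite subset of a real vector space. Then any two finite generating sets H₀, H₀' of H have the same minimal shell: S(H₀) = S(H₀'). -/
private lemma shell_subset {V : Type} [AddCommGroup V] [Module ℝ V]
    (lam : ℝ) (H : Set V)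
    (H₀ H₀' : Finset V) (hsub : ↑H₀ ⊆ H) (hsub' : ↑H₀' ⊆ H)
    (hgen : ∀ h ∈ H, ∃ n : ℕ, ∃ h₀ ∈ H₀, h = lam ^ n • h₀)
    (hgen' : ∀ h ∈ H, ∃ n : ℕ, ∃ h₀ ∈ H₀', h = lam ^ n • h₀) :
    {h : V | h ∈ H₀ ∧ ¬ ∃ m : ℕ, 0 < m ∧ ∃ h₀ ∈ H₀, h = lam ^ m • h₀} ⊆
    {h : V | h ∈ H₀' ∧ ¬ ∃ m : ℕ, 0 < m ∧ ∃ h₀ ∈ H₀', h = lam ^ m • h₀} := by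
  rintro h ⟨hmem, hirr⟩
  obtain ⟨n, h₀', hh₀', heq⟩ := hgen' h (hsub hmem)
  obtain ⟨m, h₀, hh₀, heq2⟩ := hgen h₀' (hsub' hh₀')
  have hcomb : h = lam ^ (n + m) • h₀ := by
    rw [heq, heq2, smul_smul, ← pow_add]
  have hnm : n + m = 0 := by
    by_contra hne
    exact hirr ⟨n + m, Nat.pos_of_ne_zero hne, h₀, hh₀, hcomb⟩
  have hn : n = 0 := Nat.eq_zero_of_add_eq_zero_right hnm
  have hh : h = h₀' := by rw [heq, hn, pow_zero, one_smul]
  refine ⟨hh ▸ hh₀', ?_⟩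
  rintro ⟨k, hk, g, hg, heq3⟩
  obtain ⟨j, g₀, hg₀, heq4⟩ := hgen g (hsub' hg)
  exact hirr ⟨k + j, Nat.lt_of_lt_of_le hk (Nat.le_add_right _ _), g₀, hg₀, by
    rw [heq3, heq4, smul_smul, ← pow_add]⟩

/-- Let `λ ∈ ℝ \ {0, 1, -1}` and let `H ⊆ V \ {0}` be a `λ`-profinite subset of a
real vector space.  Then any two finite generating sets `H₀, H₀'` of `H` have the
same minimal shell: `S(H₀) = S(H₀')`, where the minimal shell of a generating set
is the set of its irreducible elements (those not of the form `λ^m • h₀` with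
`m > 0`, `h₀` in the generating set). -/
theorem minimal_shell_independent_of_generating_set {V : Type} [AddCommGroup V]
    [Module ℝ V]
    (lam : ℝ) (hlam0 : lam ≠ 0) (hlam1 : lam ≠ 1) (hlamneg1 : lam ≠ -1)
    (H : Set V) (hHne0 : ∀ h ∈ H, h ≠ (0 : V))
    (H₀ H₀' : Finset V) (hsub : ↑H₀ ⊆ H) (hsub' : ↑H₀' ⊆ H)
    (hgen : ∀ h ∈ H, ∃ n : ℕ, ∃ h₀ ∈ H₀, h = lam ^ n • h₀)
    (hgen' : ∀ h ∈ H, ∃ n : ℕ, ∃ h₀ ∈ H₀', h = lam ^ n • h₀) :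
    {h : V | h ∈ H₀ ∧ ¬ ∃ m : ℕ, 0 < m ∧ ∃ h₀ ∈ H₀, h = lam ^ m • h₀} =
    {h : V | h ∈ H₀' ∧ ¬ ∃ m : ℕ, 0 < m ∧ ∃ h₀ ∈ H₀', h = lam ^ m • h₀} := by
  exact Set.Subset.antisymm
    (shell_subset lam H H₀ H₀' hsub hsub' hgen hgen')
    (shell_subset lam H H₀' H₀ hsub' hsub hgen' hgen)
end
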